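/- arXiv:2304.08050 — 2 statements merged into one kernel-verified Lean document; each statement's English description precedes it below -/
import Mathlib

section
/- There exists C > 0 such that for every θ ∈ [0,1]², every λ > 0, and every finitely supported family (c_n)_{n∈ℤ²} of complex numbers with c_n = 0 unless |n − θ|² = λ, one has ‖ x ↦ Σ_{n∈ℤ²} c_n e^{i n·x} ‖_{L⁴(𝕋²)} ≤ C ( Σ_{n∈ℤ²} |c_n|² )^{1/2}. -/
open MeasureTheory Real Filter

noncomputable section

/-- `ℝ^d`, identified with `Fin d → ℝ`. -/
abbrev Rd (d : ℕ) := Fin d → ℝ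

/-- A fundamental domain `[0,2π)^d` for the torus `𝕋^d = ℝ^d / 2πℤ^d`. -/
def box (d : ℕ) : Set (Rd d) := Set.univ.pi fun _ => Set.Ico (0:ℝ) (2*π)

def Ee (n : Fin 2 → ℤ) (x : Rd 2) : ℂ :=
  Complex.exp (Complex.I * ((∑ j, (n j : ℝ) * x j : ℝ) : ℂ))

lemma contEe (n : Fin 2 → ℤ) : Continuous (Ee n) := by
  unfold Ee; fun_prop

lemma int1d (k : ℤ) :
    (∫ x in Set.Ico (0:ℝ) (2*π), Complex.exp (Complex.I * ((k * x : ℝ) : ℂ)))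
      = if k = 0 then (2*π : ℂ) else 0 := by
  rcases eq_or_ne k 0 with hk | hk
  · subst hk
    simp [Real.volume_Ico, smul_eq_mul, Real.pi_nonneg, (by positivity : (0:ℝ) ≤ 2*π)]
  · rw [if_neg hk]
    have h1 : (∫ x in Set.Ico (0:ℝ) (2*π), Complex.exp (Complex.I * ((k * x : ℝ) : ℂ)))
        = ∫ x in (0:ℝ)..(2*π), Complex.exp ((Complex.I * k) * x) := by
      rw [intervalIntegral.integral_of_le (by positivity), MeasureTheory.integral_Ioc_eq_integral_Ioo, MeasureTheory.integral_Ico_eq_integral_Ioo]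
      congr 1; ext x; push_cast; ring_nf
    rw [h1, integral_exp_mul_complex (by simp [Complex.I_ne_zero, hk])]
    have : Complex.exp (Complex.I * k * (2*π)) = 1 := by
      rw [show Complex.I * k * (2*π) = (k : ℂ) * (2 * π * Complex.I) by push_cast; ring]
      exact Complex.exp_int_mul_two_pi_mul_I k
    simp [this]

lemma box_preimage :
    box 2 = (MeasurableEquiv.finTwoArrow (α := ℝ)) ⁻¹'
      (Set.Ico (0:ℝ) (2*π) ×ˢ Set.Ico (0:ℝ) (2*π)) := by
  ext x
  simp [box, MeasurableEquiv.finTwoArrow, Set.mem_pi, Fin.forall_fin_two, MeasurableEquiv.piFinTwo, piFinTwoEquiv]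

lemma integEe (k : Fin 2 → ℤ) :
    (∫ x in box 2, Ee k x) = if k = 0 then (((2*π)^2 : ℝ) : ℂ) else 0 := by
  have hpt : ∀ x : Rd 2, Ee k x
      = Complex.exp (Complex.I * ((k 0 * x 0 : ℝ) : ℂ))
        * Complex.exp (Complex.I * ((k 1 * x 1 : ℝ) : ℂ)) := by
    intro x
    rw [Ee, ← Complex.exp_add, Fin.sum_univ_two]
    push_cast
    ring_nf
  calc (∫ x in box 2, Ee k x)
      = ∫ y in Set.Ico (0:ℝ) (2*π) ×ˢ Set.Ico (0:ℝ) (2*π),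
          Complex.exp (Complex.I * ((k 0 * y.1 : ℝ) : ℂ))
            * Complex.exp (Complex.I * ((k 1 * y.2 : ℝ) : ℂ)) := by
        rw [box_preimage]
        rw [← (volume_preserving_finTwoArrow ℝ).setIntegral_preimage_emb
          (MeasurableEquiv.finTwoArrow).measurableEmbedding]
        refine setIntegral_congr_fun ?_ (fun x _ => ?_)
        · exact (MeasurableEquiv.finTwoArrow (α := ℝ)).measurableSet_preimage.mpr
            ((measurableSet_Ico).prod (measurableSet_Ico))
        · simpa [MeasurableEquiv.finTwoArrow, MeasurableEquiv.piFinTwo, piFinTwoEquiv] using hpt x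
    _ = (∫ y in Set.Ico (0:ℝ) (2*π), Complex.exp (Complex.I * ((k 0 * y : ℝ) : ℂ)))
        * ∫ y in Set.Ico (0:ℝ) (2*π), Complex.exp (Complex.I * ((k 1 * y : ℝ) : ℂ)) := by
        rw [← setIntegral_prod_mul]; rfl
    _ = _ := by
        rw [int1d, int1d]
        rcases eq_or_ne k 0 with hk | hk
        · subst hk; norm_num; push_cast; ring
        · rw [if_neg hk]
          have : ¬(k 0 = 0 ∧ k 1 = 0) := by
            intro h; apply hk; ext j; fin_cases j <;> simp [h.1, h.2]
          rcases Decidable.not_and_iff_or_not.mp this with h | h <;> simp [h]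

lemma integrableOn_box {f : Rd 2 → ℂ} (hf : Continuous f) : IntegrableOn f (box 2) := by
  have hsub : box 2 ⊆ Set.Icc (fun _ => 0) (fun _ => 2*π) := by
    rw [← Set.pi_univ_Icc]
    exact Set.pi_mono fun i _ => Set.Ico_subset_Icc_self
  exact (hf.continuousOn.integrableOn_compact isCompact_Icc).mono_set hsub

lemma mulConjEe (n m : Fin 2 → ℤ) (x : Rd 2) :
    Ee n x * (starRingEnd ℂ) (Ee m x) = Ee (n - m) x := by
  unfold Ee
  rw [← Complex.exp_conj, ← Complex.exp_add]
  congr 1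
  rw [map_mul, Complex.conj_I, Complex.conj_ofReal]
  simp only [Pi.sub_apply]
  push_cast [sub_mul]
  rw [Finset.sum_sub_distrib]
  ring

lemma parseval (T : Finset (Fin 2 → ℤ)) (a : (Fin 2 → ℤ) → ℂ) :
    (∫ x in box 2, ‖∑ s ∈ T, a s * Ee s x‖^2)
      = (2*π)^2 * ∑ s ∈ T, ‖a s‖^2 := by
  set g : Rd 2 → ℂ := fun x => ∑ s ∈ T, a s * Ee s x with hg
  have hgc : Continuous g := by
    apply continuous_finset_sum; intro s _; exact continuous_const.mul (contEe s)
  have hexp : ∀ x, g x * (starRingEnd ℂ) (g x)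
      = ∑ s ∈ T, ∑ t ∈ T, (a s * (starRingEnd ℂ) (a t)) * Ee (s - t) x := by
    intro x
    rw [hg]; simp only [map_sum, map_mul]
    rw [Finset.sum_mul_sum]
    refine Finset.sum_congr rfl fun s _ => Finset.sum_congr rfl fun t _ => ?_
    rw [← mulConjEe s t x]; ring
  have hint : (∫ x in box 2, g x * (starRingEnd ℂ) (g x))
      = ((2*π)^2 : ℝ) * ∑ s ∈ T, (a s * (starRingEnd ℂ) (a s)) := by
    calc (∫ x in box 2, g x * (starRingEnd ℂ) (g x))
        = ∫ x in box 2, ∑ s ∈ T, ∑ t ∈ T, (a s * (starRingEnd ℂ) (a t)) * Ee (s - t) x := by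
          exact integral_congr_ae (Filter.Eventually.of_forall fun x => hexp x)
      _ = ∑ s ∈ T, ∑ t ∈ T, (a s * (starRingEnd ℂ) (a t)) * ∫ x in box 2, Ee (s - t) x := by
          rw [integral_finset_sum]
          · refine Finset.sum_congr rfl fun s _ => ?_
            rw [integral_finset_sum]
            · exact Finset.sum_congr rfl fun t _ => integral_const_mul _ _
            · intro t _; exact (integrableOn_box (contEe _)).const_mul _
          · intro s _
            exact integrable_finset_sum _ fun t _ => (integrableOn_box (contEe _)).const_mul _
      _ = ∑ s ∈ T, (a s * (starRingEnd ℂ) (a s)) * ((2*π)^2 : ℝ) := by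
          refine Finset.sum_congr rfl fun s hs => ?_
          rw [Finset.sum_eq_single s]
          · rw [integEe, if_pos (sub_self s)]
          · intro t ht hts
            rw [integEe, if_neg (sub_ne_zero.mpr (Ne.symm hts)), mul_zero]
          · intro h; exact absurd hs h
      _ = _ := by rw [← Finset.sum_mul]; ring
  have hre : ∀ x, ‖g x‖^2 = (g x * (starRingEnd ℂ) (g x)).re := by
    intro x
    rw [Complex.mul_conj, Complex.ofReal_re, ← Complex.sq_norm]
  calc (∫ x in box 2, ‖g x‖^2)
      = ∫ x in box 2, (g x * (starRingEnd ℂ) (g x)).re :=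
        integral_congr_ae (Filter.Eventually.of_forall fun x => hre x)
    _ = (∫ x in box 2, g x * (starRingEnd ℂ) (g x)).re := by
        have h := integral_re (μ := volume.restrict (box 2))
          (f := fun x => g x * (starRingEnd ℂ) (g x))
          (integrableOn_box (hgc.mul (Complex.continuous_conj.comp hgc)))
        exact h
    _ = (2*π)^2 * ∑ s ∈ T, ‖a s‖^2 := by
        rw [hint]
        have hz : ∀ z : ℂ, z * (starRingEnd ℂ) z = ((‖z‖^2 : ℝ) : ℂ) := by
          intro z
          rw [Complex.mul_conj, ← Complex.sq_norm]
        simp only [hz, ← Complex.ofReal_sum, ← Complex.ofReal_mul, Complex.ofReal_re]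

lemma circle_line {t1 t2 s1 s2 lam n1 n2 p1 p2 q1 q2 : ℝ}
    (hn : (n1-t1)^2+(n2-t2)^2 = lam) (hp : (p1-t1)^2+(p2-t2)^2 = lam)
    (hq : (q1-t1)^2+(q2-t2)^2 = lam)
    (hn' : (s1-n1-t1)^2+(s2-n2-t2)^2 = lam) (hp' : (s1-p1-t1)^2+(s2-p2-t2)^2 = lam)
    (hq' : (s1-q1-t1)^2+(s2-q2-t2)^2 = lam)
    (hs : s1 ≠ 2*t1 ∨ s2 ≠ 2*t2)
    (hnp : n1 ≠ p1 ∨ n2 ≠ p2) (hnq : n1 ≠ q1 ∨ n2 ≠ q2) (hpq : p1 ≠ q1 ∨ p2 ≠ q2) :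
    False := by
  have e1 : (n1-p1)*(s1-2*t1) + (n2-p2)*(s2-2*t2) = 0 := by
    linear_combination (hn - hn' - hp + hp')/2
  have e2 : (q1-p1)*(s1-2*t1) + (q2-p2)*(s2-2*t2) = 0 := by
    linear_combination (hq - hq' - hp + hp')/2
  have e3 : (n1-p1)*(n1+p1-2*t1) + (n2-p2)*(n2+p2-2*t2) = 0 := by
    linear_combination hn - hp
  have e4 : (q1-p1)*(q1+p1-2*t1) + (q2-p2)*(q2+p2-2*t2) = 0 := by
    linear_combination hq - hp
  have hcross : (n1-p1)*(q2-p2) - (n2-p2)*(q1-p1) = 0 := by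
    rcases hs with h | h
    · have h0 : ((n1-p1)*(q2-p2) - (n2-p2)*(q1-p1)) * (s1-2*t1) = 0 := by
        linear_combination (q2-p2)*e1 - (n2-p2)*e2
      exact (mul_eq_zero.mp h0).resolve_right (sub_ne_zero.mpr h)
    · have h0 : ((n1-p1)*(q2-p2) - (n2-p2)*(q1-p1)) * (s2-2*t2) = 0 := by
        linear_combination (-(q1-p1))*e1 + (n1-p1)*e2
      exact (mul_eq_zero.mp h0).resolve_right (sub_ne_zero.mpr h)
  obtain ⟨t, ht1, ht2⟩ : ∃ t, q1-p1 = t*(n1-p1) ∧ q2-p2 = t*(n2-p2) := by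
    rcases hnp with h | h
    · have hu : n1 - p1 ≠ 0 := sub_ne_zero.mpr h
      refine ⟨(q1-p1)/(n1-p1), by field_simp, ?_⟩
      field_simp
      linear_combination hcross
    · have hu : n2 - p2 ≠ 0 := sub_ne_zero.mpr h
      refine ⟨(q2-p2)/(n2-p2), ?_, by field_simp⟩
      field_simp
      linear_combination -hcross
  have ht0 : t ≠ 0 := by
    intro h0
    rw [h0, zero_mul] at ht1 ht2
    rcases hpq with h | h
    · exact h (by linarith)
    · exact h (by linarith)
  have e4' : t * ((n1-p1)*(q1+p1-2*t1) + (n2-p2)*(q2+p2-2*t2)) = 0 := by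
    linear_combination e4 - (q1+p1-2*t1)*ht1 - (q2+p2-2*t2)*ht2
  have e5 : (n1-p1)*(q1+p1-2*t1) + (n2-p2)*(q2+p2-2*t2) = 0 :=
    (mul_eq_zero.mp e4').resolve_left ht0
  have e6 : (1-t) * ((n1-p1)^2 + (n2-p2)^2) = 0 := by
    linear_combination e3 - e5 + (n1-p1)*ht1 + (n2-p2)*ht2
  rcases mul_eq_zero.mp e6 with h | h
  · have ht : t = 1 := by linarith
    rw [ht, one_mul] at ht1 ht2
    rcases hnq with h' | h'
    · exact h' (by linarith)
    · exact h' (by linarith)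
  · have ha : (n1-p1)^2 = 0 := by linarith [sq_nonneg (n1-p1), sq_nonneg (n2-p2)]
    have hb : (n2-p2)^2 = 0 := by linarith [sq_nonneg (n1-p1), sq_nonneg (n2-p2)]
    have h1 : n1 - p1 = 0 := by
      have := sq_eq_zero_iff.mp ha; linarith
    have h2 : n2 - p2 = 0 := by
      have := sq_eq_zero_iff.mp hb; linarith
    rcases hnp with h' | h'
    · exact h' (by linarith)
    · exact h' (by linarith)

lemma mulEe (n m : Fin 2 → ℤ) (x : Rd 2) : Ee n x * Ee m x = Ee (n + m) x := by
  unfold Ee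
  rw [← Complex.exp_add]
  congr 1
  simp only [Pi.add_apply]
  push_cast [add_mul]
  rw [Finset.sum_add_distrib]
  ring

lemma fsq (S : Finset (Fin 2 → ℤ)) (c : (Fin 2 → ℤ) → ℂ) (x : Rd 2) :
    (∑ n ∈ S, c n * Ee n x)^2
      = ∑ s ∈ (S ×ˢ S).image (fun p => p.1 + p.2),
          (∑ p ∈ (S ×ˢ S).filter (fun p => p.1 + p.2 = s), c p.1 * c p.2) * Ee s x := by
  classical
  rw [sq, Finset.sum_mul_sum]
  rw [← Finset.sum_product']
  rw [← Finset.sum_fiberwise_of_maps_to (g := fun p => p.1 + p.2)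
    (fun p hp => Finset.mem_image_of_mem _ hp)]
  refine Finset.sum_congr rfl fun s _ => ?_
  rw [Finset.sum_mul]
  refine Finset.sum_congr rfl fun p hp => ?_
  have hps : p.1 + p.2 = s := (Finset.mem_filter.mp hp).2
  rw [mul_mul_mul_comm, mulEe, hps]

lemma card_P_le_two (θ : Fin 2 → ℝ) (lam : ℝ) (S : Finset (Fin 2 → ℤ))
    (hS : ∀ n ∈ S, ∑ j, ((n j : ℝ) - θ j)^2 = lam)
    (s : Fin 2 → ℤ) (hs : ¬((s 0 : ℝ) = 2*θ 0 ∧ (s 1 : ℝ) = 2*θ 1)) :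
    ((S ×ˢ S).filter (fun p => p.1 + p.2 = s)).card ≤ 2 := by
  classical
  set P := (S ×ˢ S).filter (fun p => p.1 + p.2 = s) with hP
  have hsub : ∀ p ∈ P, p.2 = s - p.1 := by
    intro p hp
    have := (Finset.mem_filter.mp hp).2
    rw [← this]; abel
  have hinj : Set.InjOn Prod.fst (P : Set ((Fin 2 → ℤ) × (Fin 2 → ℤ))) := by
    intro p hp q hq h
    have h1 := hsub p (by simpa using hp)
    have h2 := hsub q (by simpa using hq)
    exact Prod.ext h (by rw [h1, h2, h])
  rw [← Finset.card_image_of_injOn hinj]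
  set F := P.image Prod.fst with hF
  have hmem : ∀ n ∈ F, n ∈ S ∧ s - n ∈ S := by
    intro n hn
    obtain ⟨p, hp, rfl⟩ := Finset.mem_image.mp hn
    have h1 := Finset.mem_filter.mp hp
    have h2 := Finset.mem_product.mp h1.1
    refine ⟨h2.1, ?_⟩
    rw [show s - p.1 = p.2 from by rw [← h1.2]; abel]
    exact h2.2
  have cond : ∀ n ∈ F,
      (((n 0 : ℝ) - θ 0)^2 + ((n 1 : ℝ) - θ 1)^2 = lam)
      ∧ (((s 0 : ℝ) - (n 0 : ℝ) - θ 0)^2 + ((s 1 : ℝ) - (n 1 : ℝ) - θ 1)^2 = lam) := by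
    intro n hn
    obtain ⟨h1, h2⟩ := hmem n hn
    constructor
    · have := hS n h1; rwa [Fin.sum_univ_two] at this
    · have := hS _ h2
      rw [Fin.sum_univ_two] at this
      simp only [Pi.sub_apply, Int.cast_sub] at this
      convert this using 2 <;> ring
  by_contra hc
  push_neg at hc
  obtain ⟨n, hn⟩ := Finset.card_pos.mp (by omega : 0 < F.card)
  have h2 : 0 < (F.erase n).card := by rw [Finset.card_erase_of_mem hn]; omega
  obtain ⟨p, hp⟩ := Finset.card_pos.mp h2
  have h3 : 0 < ((F.erase n).erase p).card := by
    rw [Finset.card_erase_of_mem hp, Finset.card_erase_of_mem hn]; omega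
  obtain ⟨q, hq⟩ := Finset.card_pos.mp h3
  have hpn : p ≠ n := (Finset.mem_erase.mp hp).1
  have hqp : q ≠ p := (Finset.mem_erase.mp hq).1
  have hqn : q ≠ n := (Finset.mem_erase.mp ((Finset.mem_erase.mp hq).2)).1
  have hpF : p ∈ F := (Finset.mem_erase.mp hp).2
  have hqF : q ∈ F := (Finset.mem_erase.mp ((Finset.mem_erase.mp hq).2)).2
  have dist : ∀ a b : Fin 2 → ℤ, a ≠ b → ((a 0 : ℝ) ≠ (b 0 : ℝ) ∨ (a 1 : ℝ) ≠ (b 1 : ℝ)) := by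
    intro a b hab
    by_contra h
    push_neg at h
    apply hab
    funext j
    fin_cases j
    · exact_mod_cast h.1
    · exact_mod_cast h.2
  exact circle_line (cond n hn).1 (cond p hpF).1 (cond q hqF).1
    (cond n hn).2 (cond p hpF).2 (cond q hqF).2
    (not_and_or.mp hs) (dist n p (Ne.symm hpn)) (dist n q (Ne.symm hqn)) (dist p q (Ne.symm hqp))

lemma sum_bound (θ : Fin 2 → ℝ) (lam : ℝ) (S : Finset (Fin 2 → ℤ)) (c : (Fin 2 → ℤ) → ℂ)
    (hmem : ∀ n, n ∈ S ↔ c n ≠ 0)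
    (hS : ∀ n ∈ S, ∑ j, ((n j : ℝ) - θ j)^2 = lam) :
    ∑ s ∈ (S ×ˢ S).image (fun p => p.1 + p.2),
        ‖∑ p ∈ (S ×ˢ S).filter (fun p => p.1 + p.2 = s), c p.1 * c p.2‖^2
      ≤ 3 * (∑ n ∈ S, ‖c n‖^2)^2 := by
  classical
  set E := ∑ n ∈ S, ‖c n‖^2 with hEdef
  have hE0 : 0 ≤ E := Finset.sum_nonneg fun n _ => by positivity
  set T := (S ×ˢ S).image (fun p : (Fin 2 → ℤ) × (Fin 2 → ℤ) => p.1 + p.2) with hT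
  set P : (Fin 2 → ℤ) → Finset ((Fin 2 → ℤ) × (Fin 2 → ℤ)) :=
    fun s => (S ×ˢ S).filter (fun p => p.1 + p.2 = s) with hPdef
  set a : (Fin 2 → ℤ) → ℂ := fun s => ∑ p ∈ P s, c p.1 * c p.2 with ha
  -- shift bound
  have hshift : ∀ s : Fin 2 → ℤ, ∑ n ∈ S, ‖c (s - n)‖^2 ≤ E := by
    intro s
    have hinj : ∀ x ∈ S, ∀ y ∈ S, s - x = s - y → x = y := by
      intro x _ y _ h; simpa using sub_right_injective h
    rw [← Finset.sum_image (g := fun n => s - n) (f := fun m => ‖c m‖^2) hinj]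
    calc ∑ m ∈ S.image (fun n => s - n), ‖c m‖^2
        = ∑ m ∈ S.image (fun n => s - n) ∩ S, ‖c m‖^2 := by
          refine (Finset.sum_subset Finset.inter_subset_left fun x hx hx' => ?_).symm
          have : x ∉ S := fun h => hx' (Finset.mem_inter.mpr ⟨hx, h⟩)
          have : c x = 0 := not_ne_iff.mp (fun h => this ((hmem x).mpr h))
          simp [this]
      _ ≤ E := Finset.sum_le_sum_of_subset_of_nonneg Finset.inter_subset_right
          (fun n _ _ => by positivity)
  -- basic norm bound
  have hsub : ∀ s, ∀ p ∈ P s, p.2 = s - p.1 := by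
    intro s p hp
    have := (Finset.mem_filter.mp hp).2
    rw [← this]; abel
  have hinjP : ∀ s, ∀ x ∈ P s, ∀ y ∈ P s, x.1 = y.1 → x = y := by
    intro s x hx y hy h
    exact Prod.ext h (by rw [hsub s x hx, hsub s y hy, h])
  have h1 : ∀ s, ‖a s‖ ≤ ∑ p ∈ P s, ‖c p.1‖ * ‖c p.2‖ := by
    intro s
    refine (norm_sum_le _ _).trans_eq ?_
    exact Finset.sum_congr rfl fun p _ => norm_mul _ _
  -- bound valid for all s
  have hCS_all : ∀ s, ‖a s‖^2 ≤ E^2 := by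
    intro s
    have h2 : ∑ p ∈ P s, ‖c p.1‖ * ‖c p.2‖
        = ∑ n ∈ (P s).image Prod.fst, ‖c n‖ * ‖c (s - n)‖ := by
      rw [Finset.sum_image (hinjP s)]
      exact Finset.sum_congr rfl fun p hp => by rw [← hsub s p hp]
    have h3 : ∑ n ∈ (P s).image Prod.fst, ‖c n‖ * ‖c (s - n)‖
        ≤ ∑ n ∈ S, ‖c n‖ * ‖c (s - n)‖ := by
      refine Finset.sum_le_sum_of_subset_of_nonneg ?_ (fun n _ _ => by positivity)
      intro n hn
      obtain ⟨p, hp, rfl⟩ := Finset.mem_image.mp hn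
      exact (Finset.mem_product.mp (Finset.mem_filter.mp hp).1).1
    have h4 : (∑ n ∈ S, ‖c n‖ * ‖c (s - n)‖)^2
        ≤ (∑ n ∈ S, ‖c n‖^2) * (∑ n ∈ S, ‖c (s - n)‖^2) :=
      Finset.sum_mul_sq_le_sq_mul_sq S _ _
    have h5 : ‖a s‖ ≤ ∑ n ∈ S, ‖c n‖ * ‖c (s - n)‖ := (h1 s).trans (h2 ▸ h3)
    have h6 : ‖a s‖^2 ≤ (∑ n ∈ S, ‖c n‖ * ‖c (s - n)‖)^2 := by
      have := norm_nonneg (a s)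
      nlinarith [Finset.sum_nonneg (fun n (_ : n ∈ S) => mul_nonneg (norm_nonneg (c n)) (norm_nonneg (c (s - n))))]
    calc ‖a s‖^2 ≤ (∑ n ∈ S, ‖c n‖^2) * (∑ n ∈ S, ‖c (s - n)‖^2) := h6.trans h4
      _ ≤ E * E := by
          refine mul_le_mul le_rfl (hshift s) (Finset.sum_nonneg fun n _ => by positivity) hE0
      _ = E^2 := (sq E).symm
  -- bound for good s
  have hCS_good : ∀ s, (P s).card ≤ 2 →
      ‖a s‖^2 ≤ 2 * ∑ p ∈ P s, ‖c p.1‖^2 * ‖c p.2‖^2 := by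
    intro s hcard
    have h4 : (∑ p ∈ P s, ‖c p.1‖ * ‖c p.2‖)^2
        ≤ (∑ p ∈ P s, (‖c p.1‖ * ‖c p.2‖)^2) * ((P s).card : ℝ) := by
      have := Finset.sum_mul_sq_le_sq_mul_sq (P s) (fun p => ‖c p.1‖ * ‖c p.2‖) (fun _ => 1)
      simpa using this
    have h6 : ‖a s‖^2 ≤ (∑ p ∈ P s, ‖c p.1‖ * ‖c p.2‖)^2 := by
      have := norm_nonneg (a s)
      nlinarith [h1 s, Finset.sum_nonneg (fun p (_ : p ∈ P s) => mul_nonneg (norm_nonneg (c p.1)) (norm_nonneg (c p.2)))]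
    calc ‖a s‖^2 ≤ (∑ p ∈ P s, (‖c p.1‖ * ‖c p.2‖)^2) * ((P s).card : ℝ) := h6.trans h4
      _ ≤ (∑ p ∈ P s, (‖c p.1‖ * ‖c p.2‖)^2) * 2 := by
          refine mul_le_mul_of_nonneg_left ?_ (Finset.sum_nonneg fun p _ => by positivity)
          exact_mod_cast hcard
      _ = 2 * ∑ p ∈ P s, ‖c p.1‖^2 * ‖c p.2‖^2 := by
          rw [mul_comm]; congr 1; exact Finset.sum_congr rfl fun p _ => by ring
  -- split good/bad
  set good : (Fin 2 → ℤ) → Prop := fun s => ¬((s 0 : ℝ) = 2*θ 0 ∧ (s 1 : ℝ) = 2*θ 1) with hgood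
  have hsplit : ∑ s ∈ T, ‖a s‖^2
      = ∑ s ∈ T.filter good, ‖a s‖^2 + ∑ s ∈ T.filter (fun s => ¬ good s), ‖a s‖^2 :=
    (Finset.sum_filter_add_sum_filter_not T good _).symm
  have hgoodsum : ∑ s ∈ T.filter good, ‖a s‖^2 ≤ 2 * E^2 := by
    calc ∑ s ∈ T.filter good, ‖a s‖^2
        ≤ ∑ s ∈ T.filter good, 2 * ∑ p ∈ P s, ‖c p.1‖^2 * ‖c p.2‖^2 := by
          refine Finset.sum_le_sum fun s hs => ?_
          exact hCS_good s (card_P_le_two θ lam S hS s (Finset.mem_filter.mp hs).2)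
      _ ≤ ∑ s ∈ T, 2 * ∑ p ∈ P s, ‖c p.1‖^2 * ‖c p.2‖^2 := by
          refine Finset.sum_le_sum_of_subset_of_nonneg (Finset.filter_subset _ _)
            (fun s _ _ => by positivity)
      _ = 2 * ∑ s ∈ T, ∑ p ∈ P s, ‖c p.1‖^2 * ‖c p.2‖^2 := by rw [Finset.mul_sum]
      _ = 2 * ∑ p ∈ S ×ˢ S, ‖c p.1‖^2 * ‖c p.2‖^2 := by
          congr 1
          exact Finset.sum_fiberwise_of_maps_to (fun p hp => Finset.mem_image_of_mem _ hp) _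
      _ = 2 * E^2 := by
          congr 1
          rw [sq, Finset.sum_mul_sum, ← Finset.sum_product']
  have hbadcard : (T.filter (fun s => ¬ good s)).card ≤ 1 := by
    refine Finset.card_le_one.mpr fun s hs t ht => ?_
    have hs' := not_not.mp (Finset.mem_filter.mp hs).2
    have ht' := not_not.mp (Finset.mem_filter.mp ht).2
    funext j
    fin_cases j
    · exact_mod_cast hs'.1.trans ht'.1.symm
    · exact_mod_cast hs'.2.trans ht'.2.symm
  have hbadsum : ∑ s ∈ T.filter (fun s => ¬ good s), ‖a s‖^2 ≤ E^2 := by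
    calc ∑ s ∈ T.filter (fun s => ¬ good s), ‖a s‖^2
        ≤ (T.filter (fun s => ¬ good s)).card • E^2 :=
          Finset.sum_le_card_nsmul _ _ _ (fun s _ => hCS_all s)
      _ ≤ 1 • E^2 := by
          refine nsmul_le_nsmul_left (by positivity) hbadcard
      _ = E^2 := one_smul _ _
  calc ∑ s ∈ T, ‖a s‖^2 ≤ 2 * E^2 + E^2 := by rw [hsplit]; exact add_le_add hgoodsum hbadsum
    _ = 3 * E^2 := by ring

/-- The θ-shifted Zygmund inequality on `𝕋²`. -/
theorem zygmund_shifted :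
    ∃ C : ℝ, 0 < C ∧
      ∀ (θ : Rd 2), (∀ j, θ j ∈ Set.Icc (0:ℝ) 1) →
      ∀ lam : ℝ, 0 < lam →
      ∀ c : (Fin 2 → ℤ) → ℂ, (Function.support c).Finite →
        (∀ n : Fin 2 → ℤ, c n ≠ 0 → ∑ j, ((n j : ℝ) - θ j)^2 = lam) →
        (∫ x in box 2,
            ‖∑' n : Fin 2 → ℤ,
                c n * Complex.exp (Complex.I * ((∑ j, (n j : ℝ) * x j : ℝ) : ℂ))‖^4) ^ ((1:ℝ)/4)
          ≤ C * (∑' n : Fin 2 → ℤ, ‖c n‖^2) ^ ((1:ℝ)/2) := by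
  classical
  refine ⟨(3*(2*π)^2)^((1:ℝ)/4), by positivity, ?_⟩
  intro θ hθ lam hlam c hfin hfreq
  set S : Finset (Fin 2 → ℤ) := hfin.toFinset with hSdef
  have hmem : ∀ n, n ∈ S ↔ c n ≠ 0 := fun n => by
    rw [hSdef, Set.Finite.mem_toFinset, Function.mem_support]
  have hS : ∀ n ∈ S, ∑ j, ((n j : ℝ) - θ j)^2 = lam := fun n hn => hfreq n ((hmem n).mp hn)
  set T := (S ×ˢ S).image (fun p : (Fin 2 → ℤ) × (Fin 2 → ℤ) => p.1 + p.2) with hT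
  set a : (Fin 2 → ℤ) → ℂ :=
    fun s => ∑ p ∈ (S ×ˢ S).filter (fun p => p.1 + p.2 = s), c p.1 * c p.2 with ha
  set E := ∑ n ∈ S, ‖c n‖^2 with hE
  have hE0 : 0 ≤ E := Finset.sum_nonneg fun n _ => by positivity
  have hzero : ∀ b ∉ S, c b = 0 := fun b hb => not_ne_iff.mp fun h => hb ((hmem b).mpr h)
  have htsum2 : (∑' n : Fin 2 → ℤ, ‖c n‖^2) = E := by
    refine tsum_eq_sum fun b hb => by rw [hzero b hb]; simp
  have htsum1 : ∀ x : Rd 2,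
      (∑' n : Fin 2 → ℤ, c n * Complex.exp (Complex.I * ((∑ j, (n j : ℝ) * x j : ℝ) : ℂ)))
        = ∑ n ∈ S, c n * Ee n x := by
    intro x
    exact tsum_eq_sum fun b hb => by rw [hzero b hb]; simp
  have hint : (∫ x in box 2,
      ‖∑' n : Fin 2 → ℤ,
          c n * Complex.exp (Complex.I * ((∑ j, (n j : ℝ) * x j : ℝ) : ℂ))‖^4)
      = (2*π)^2 * ∑ s ∈ T, ‖a s‖^2 := by
    rw [← parseval T a]
    refine integral_congr_ae (Filter.Eventually.of_forall fun x => ?_)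
    dsimp only
    rw [htsum1 x, show (4:ℕ) = 2*2 from rfl, pow_mul, ← norm_pow, fsq S c x]
  have hb := sum_bound θ lam S c hmem hS
  have hI0 : (0:ℝ) ≤ (2*π)^2 * ∑ s ∈ T, ‖a s‖^2 := by
    have : (0:ℝ) ≤ ∑ s ∈ T, ‖a s‖^2 := Finset.sum_nonneg fun s _ => by positivity
    positivity
  have hIle : (2*π)^2 * ∑ s ∈ T, ‖a s‖^2 ≤ 3*(2*π)^2*E^2 := by
    calc (2*π)^2 * ∑ s ∈ T, ‖a s‖^2 ≤ (2*π)^2 * (3 * E^2) := by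
          refine mul_le_mul_of_nonneg_left ?_ (by positivity)
          exact hb
      _ = 3*(2*π)^2*E^2 := by ring
  rw [htsum2, hint]
  calc ((2*π)^2 * ∑ s ∈ T, ‖a s‖^2) ^ ((1:ℝ)/4)
      ≤ (3*(2*π)^2*E^2) ^ ((1:ℝ)/4) := Real.rpow_le_rpow hI0 hIle (by norm_num)
    _ = (3*(2*π)^2)^((1:ℝ)/4) * (E^2)^((1:ℝ)/4) := Real.mul_rpow (by positivity) (by positivity)
    _ = (3*(2*π)^2)^((1:ℝ)/4) * E^((1:ℝ)/2) := by
        congr 1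
        rw [← Real.rpow_natCast E 2, ← Real.rpow_mul hE0]
        norm_num
end
end

section
/- Let θ₁, θ₂ ∈ ℝ be linearly independent over ℚ and set θ = (θ₁, θ₂). Then for every ε > 0 there exist n, m ∈ ℤ² such that 0 < | |n − θ|² − |m − θ|² | < ε. In particular, the set { |n − θ|² : n ∈ ℤ² } does not satisfy a uniform gap condition. -/
/-!
The differences `|n - θ|² - |m - θ|²` include `4 (k θ₁ + l θ₂)` for all integers `k, l`, and by
ℚ-independence the group `ℤ θ₁ + ℤ θ₂` is dense in `ℝ`, so it has arbitrarily small positive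
elements.
-/

open Real

noncomputable section

/-- `|n - θ|²` for `n ∈ ℤ²` and `θ ∈ ℝ²`. -/
def distSq (n : ℤ × ℤ) (θ₁ θ₂ : ℝ) : ℝ :=
  ((n.1 : ℝ) - θ₁)^2 + ((n.2 : ℝ) - θ₂)^2

theorem irrational_div_of_rat_linearIndependent {a b : ℝ}
    (hind : ∀ k l : ℚ, (k : ℝ) * a + (l : ℝ) * b = 0 → k = 0 ∧ l = 0) :
    Irrational (a / b) := by
  rintro ⟨q, hq⟩
  rcases eq_or_ne b 0 with rfl | hb
  · simpa using hind 0 1 (by simp)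
  · have hrel : ((1 : ℚ) : ℝ) * a + ((-q : ℚ) : ℝ) * b = 0 := by
      push_cast
      rw [hq, neg_mul, div_mul_cancel₀ a hb]
      ring
    simpa using (hind 1 (-q) hrel).1

theorem exists_int_add_mem_Ioo_of_irrational_div {a b : ℝ} (h : Irrational (a / b))
    {ε : ℝ} (hε : 0 < ε) : ∃ k l : ℤ, (k : ℝ) * a + l * b ∈ Set.Ioo 0 ε := by
  obtain ⟨x, hx, hmem⟩ := (dense_addSubgroupClosure_pair_iff.2 h).exists_mem_open isOpen_Ioo
    (Set.nonempty_Ioo.2 hε)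
  obtain ⟨k, l, rfl⟩ := AddSubgroup.mem_closure_pair.1 hx
  exact ⟨k, l, by simpa [zsmul_eq_mul] using hmem⟩

/-- Both lattice points have norm `5 (k² + l²)` and they differ by `2 (k, l)`. -/
theorem distSq_sub_distSq_eq (k l : ℤ) (θ₁ θ₂ : ℝ) :
    distSq (2 * l - k, -l - 2 * k) θ₁ θ₂ - distSq (k + 2 * l, l - 2 * k) θ₁ θ₂
      = 4 * (k * θ₁ + l * θ₂) := by
  simp only [distSq]
  push_cast
  ring

theorem exists_distSq_sub_mem_Ioo {θ₁ θ₂ : ℝ} (h : Irrational (θ₁ / θ₂))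
    {ε : ℝ} (hε : 0 < ε) :
    ∃ n m : ℤ × ℤ, distSq n θ₁ θ₂ - distSq m θ₁ θ₂ ∈ Set.Ioo 0 ε := by
  obtain ⟨k, l, hpos, hlt⟩ :=
    exists_int_add_mem_Ioo_of_irrational_div h (by positivity : 0 < ε / 4)
  refine ⟨(2 * l - k, -l - 2 * k), (k + 2 * l, l - 2 * k), ?_⟩
  rw [distSq_sub_distSq_eq]
  constructor <;> linarith

theorem not_exists_uniform_gap {α : Type*} {f : α → ℝ}
    (hsmall : ∀ ε : ℝ, 0 < ε → ∃ n m : α, 0 < |f n - f m| ∧ |f n - f m| < ε) :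
    ¬ ∃ γ : ℝ, 0 < γ ∧ ∀ n m : α, f n ≠ f m → γ ≤ |f n - f m| := by
  rintro ⟨γ, hγ, hgap⟩
  obtain ⟨n, m, hpos, hlt⟩ := hsmall γ hγ
  have hne : f n ≠ f m := sub_ne_zero.1 (abs_pos.1 hpos)
  exact (hgap n m hne).not_gt hlt

/-- If `θ₁, θ₂` are linearly independent over `ℚ`, the set `{|n-θ|² : n ∈ ℤ²}` has
arbitrarily small positive differences; in particular it satisfies no uniform gap
condition. -/
theorem no_gap_of_irrational (θ₁ θ₂ : ℝ)
    (hind : ∀ k l : ℚ, (k : ℝ) * θ₁ + (l : ℝ) * θ₂ = 0 → k = 0 ∧ l = 0) :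
    (∀ ε : ℝ, 0 < ε → ∃ n m : ℤ × ℤ,
        0 < |distSq n θ₁ θ₂ - distSq m θ₁ θ₂| ∧ |distSq n θ₁ θ₂ - distSq m θ₁ θ₂| < ε) ∧
    ¬ ∃ γ : ℝ, 0 < γ ∧ ∀ n m : ℤ × ℤ,
        distSq n θ₁ θ₂ ≠ distSq m θ₁ θ₂ → γ ≤ |distSq n θ₁ θ₂ - distSq m θ₁ θ₂| := by
  have hsmall : ∀ ε : ℝ, 0 < ε → ∃ n m : ℤ × ℤ,
      0 < |distSq n θ₁ θ₂ - distSq m θ₁ θ₂| ∧ |distSq n θ₁ θ₂ - distSq m θ₁ θ₂| < ε := by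
    intro ε hε
    obtain ⟨n, m, hpos, hlt⟩ :=
      exists_distSq_sub_mem_Ioo (irrational_div_of_rat_linearIndependent hind) hε
    exact ⟨n, m, abs_pos_of_pos hpos, (abs_of_pos hpos).trans_lt hlt⟩
  exact ⟨hsmall, not_exists_uniform_gap (f := fun n => distSq n θ₁ θ₂) hsmall⟩
end
end
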